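/- arXiv:1712.08103 — 5 statements merged into one kernel-verified Lean document; each statement's English description precedes it below -/
import Mathlib

section
/- Let A be a group of automorphisms of a finite group G with gcd(|G|, |A|) = 1. Then [G, A, A] = [G, A], i.e., [[G,A], A] = [G, A]. -/
/-- The fixed-point subgroup of a single automorphism. -/
def autFixed {G : Type*} [Group G] (f : MulAut G) : Subgroup G where
  carrier := {g | f g = g}
  one_mem' := map_one f
  mul_mem' := by intro a b ha hb; simp only [Set.mem_setOf_eq, map_mul] at *; rw [ha, hb]
  inv_mem' := by intro a ha; simp only [Set.mem_setOf_eq, map_inv] at *; rw [ha]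

open Pointwise Subgroup

/-- Fixed point in an invariant coset, for an automorphism of `p`-power order. -/
lemma fixed_point_coset {G : Type*} [Group G] [Finite G] (f : MulAut G) (N : Subgroup G)
    (p : ℕ) (hp : p.Prime) {e : ℕ} (hord : orderOf f ∣ p ^ e)
    (hNf : ∀ x ∈ N, f x ∈ N) (g : G) (hg : g⁻¹ * f g ∈ N)
    (hcard : ¬ p ∣ Nat.card N) : ∃ h ∈ N, f (g * h) = g * h := by
  haveI : Fact p.Prime := ⟨hp⟩
  set C : Set G := {x : G | g⁻¹ * x ∈ N} with hC
  have hCf : ∀ x ∈ C, f x ∈ C := by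
    intro x hx
    have : g⁻¹ * f x = (g⁻¹ * f g) * f (g⁻¹ * x) := by
      simp [mul_assoc]
    simp only [hC, Set.mem_setOf_eq] at hx ⊢
    rw [this]
    exact N.mul_mem hg (hNf _ hx)
  have hCfin : C.Finite := Set.toFinite C
  have hstab : f ∈ MulAction.stabilizer (MulAut G) C := by
    have himg : f • C = (fun x => f x) '' C := rfl
    have hsub : (fun x => f x) '' C ⊆ C := by
      rintro _ ⟨x, hx, rfl⟩; exact hCf x hx
    have heq : (fun x => f x) '' C = C :=
      Set.eq_of_subset_of_ncard_le hsub
        (le_of_eq (Set.ncard_image_of_injective C f.injective).symm) hCfin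
    simpa [MulAction.mem_stabilizer_iff, himg] using heq
  have hzp : Subgroup.zpowers f ≤ MulAction.stabilizer (MulAut G) C :=
    Subgroup.zpowers_le.mpr hstab
  let S : SubMulAction (Subgroup.zpowers f) G :=
    { carrier := C
      smul_mem' := by
        intro c x hx
        have hc : (c : MulAut G) • C = C := hzp c.2
        have : (c : MulAut G) • x ∈ (c : MulAut G) • C := Set.smul_mem_smul_set hx
        rw [hc] at this
        exact this }
  have hpg : IsPGroup p (Subgroup.zpowers f) := by
    obtain ⟨k, -, hk⟩ := (Nat.dvd_prime_pow hp).mp (hord.trans dvd_rfl)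
    exact IsPGroup.of_card (by rw [Nat.card_zpowers, hk])
  have hcardC : Nat.card S = Nat.card N := by
    refine Nat.card_congr ⟨fun x => ⟨g⁻¹ * x.1, x.2⟩, fun n => ⟨g * n.1, by
      show g⁻¹ * (g * n.1) ∈ N
      simp⟩, ?_, ?_⟩
    · intro x; ext; simp
    · intro n; ext; simp
  have := hpg.nonempty_fixed_point_of_prime_not_dvd_card S (by rw [hcardC]; exact hcard)
  obtain ⟨x, hx⟩ := this
  have hfx : f x.1 = x.1 := by
    have := hx ⟨f, Subgroup.mem_zpowers f⟩
    exact congrArg Subtype.val this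
  refine ⟨g⁻¹ * x.1, x.2, ?_⟩
  simp only [mul_inv_cancel_left]
  exact hfx

/-- Coprime action: `[G, A, A] = [G, A]`. -/
theorem stmt2 {A G : Type*} [Group A] [Group G] [Finite A] [Finite G]
    (φ : A →* MulAut G) (hcop : Nat.Coprime (Nat.card G) (Nat.card A))
    (GA : Subgroup G)
    (hGA : GA = Subgroup.closure {x : G | ∃ (g : G) (a : A), x = g⁻¹ * φ a g}) :
    Subgroup.closure {y : G | ∃ x ∈ GA, ∃ a : A, y = x⁻¹ * φ a x} = GA := by
  set K := Subgroup.closure {y : G | ∃ x ∈ GA, ∃ a : A, y = x⁻¹ * φ a x} with hK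
  have hmemGA : ∀ (g : G) (a : A), g⁻¹ * φ a g ∈ GA := by
    intro g a
    rw [hGA]
    exact Subgroup.subset_closure ⟨g, a, rfl⟩
  have hinv : ∀ (a : A), ∀ x ∈ GA, φ a x ∈ GA := by
    intro a x hx
    have hx' : x ∈ Subgroup.closure {x : G | ∃ (g : G) (a : A), x = g⁻¹ * φ a g} := hGA ▸ hx
    have hmap : (Subgroup.closure {x : G | ∃ (g : G) (a : A), x = g⁻¹ * φ a g}).map
        (φ a).toMonoidHom ≤ GA := by
      rw [MonoidHom.map_closure]
      refine (Subgroup.closure_le _).mpr ?_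
      rintro _ ⟨_, ⟨g, b, rfl⟩, rfl⟩
      have hform : (φ a).toMonoidHom (g⁻¹ * φ b g) = (g⁻¹ * φ a g)⁻¹ * (g⁻¹ * φ (a * b) g) := by
        simp [map_mul, mul_assoc]
      rw [hform]
      exact mul_mem (inv_mem (hmemGA g a)) (hmemGA g (a * b))
    exact hmap ⟨x, hx', rfl⟩
  have key : ∀ n : ℕ, ∀ a : A, orderOf a = n → ∀ g : G, g⁻¹ * φ a g ∈ K := by
    intro n
    induction n using Nat.strong_induction_on with
    | _ n ih =>
      intro a ha g
      rcases eq_or_ne n 1 with h1 | h1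
      · have : a = 1 := orderOf_eq_one_iff.mp (ha.trans h1)
        subst this
        simpa using one_mem K
      by_cases hpp : IsPrimePow n
      · -- prime power order: use the fixed point lemma with N = GA
        obtain ⟨p, e, hp0, he, hpe⟩ := hpp
        have hp : Nat.Prime p := Nat.prime_iff.mpr hp0
        have hpA : p ∣ Nat.card A := by
          refine dvd_trans ?_ (ha ▸ orderOf_dvd_natCard a)
          exact hpe ▸ dvd_pow_self p he.ne'
        have hpGA : ¬ p ∣ Nat.card GA := by
          intro hdvd
          have h2 : p ∣ Nat.card G := hdvd.trans (Subgroup.card_subgroup_dvd_card GA)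
          have : p ∣ 1 := hcop ▸ Nat.dvd_gcd h2 hpA
          exact hp.one_lt.ne' (Nat.dvd_one.mp this)
        have hord : orderOf (φ a) ∣ p ^ e := by
          rw [hpe, ← ha]
          exact orderOf_map_dvd φ a
        obtain ⟨h, hh, hfix⟩ := fixed_point_coset (φ a) GA p hp hord (hinv a) g
          (hmemGA g a) hpGA
        have hgoal : g⁻¹ * φ a g = (h⁻¹)⁻¹ * φ a h⁻¹ := by
          rw [map_mul] at hfix
          rw [map_inv, inv_inv]
          have : φ a g = g * h * (φ a h)⁻¹ := by
            rw [← hfix]; group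
          rw [this]; group
        rw [hgoal]
        exact Subgroup.subset_closure ⟨h⁻¹, inv_mem hh, a, rfl⟩
      · -- composite order: split into coprime parts
        have hn0 : n ≠ 0 := by
          rw [← ha]; exact (orderOf_pos a).ne'
        obtain ⟨p, hp, hpn⟩ := Nat.exists_prime_and_dvd h1
        set pe := p ^ n.factorization p with hpe
        set m := n / pe with hm
        have hpem : pe * m = n := Nat.ordProj_mul_ordCompl_eq_self n p
        have hpm : ¬ p ∣ m := Nat.not_dvd_ordCompl hp hn0
        have hfpos : 0 < n.factorization p := hp.factorization_pos_of_dvd hn0 hpn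
        have hpe1 : 1 < pe := Nat.one_lt_pow hfpos.ne' hp.one_lt
        have hm1 : 1 < m := by
          rcases Nat.lt_or_ge 1 m with hlt | hge
          · exact hlt
          · exfalso
            have hm0 : m ≠ 0 := by
              rintro hm0
              rw [hm0, mul_zero] at hpem
              exact hn0 hpem.symm
            have hmeq : m = 1 := le_antisymm hge (Nat.one_le_iff_ne_zero.mpr hm0)
            have hpen : pe = n := by
              conv_rhs => rw [← hpem, hmeq, mul_one]
            exact hpp ⟨p, n.factorization p, Nat.prime_iff.mp hp, hfpos, by
              rw [← hpe, hpen]⟩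
        have hcopr : Nat.Coprime pe m :=
          Nat.Coprime.pow_left _ (hp.coprime_iff_not_dvd.mpr hpm)
        obtain ⟨u, v, huv⟩ : ∃ u v : ℤ, u * pe + v * m = 1 := by
          have : IsCoprime (pe : ℤ) (m : ℤ) := Int.isCoprime_iff_gcd_eq_one.mpr (by
            simpa [Int.gcd_natCast_natCast] using hcopr)
          obtain ⟨u, v, huv⟩ := this
          exact ⟨u, v, by linarith⟩
        set a₁ := a ^ (v * (m : ℤ)) with ha₁
        set a₂ := a ^ (u * (pe : ℤ)) with ha₂
        have h21 : a₂ * a₁ = a := by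
          rw [ha₂, ha₁, ← zpow_add, huv, zpow_one]
        have hzn : a ^ (n : ℤ) = 1 := by
          rw [zpow_natCast, ← ha, pow_orderOf_eq_one]
        have hoa₁ : orderOf a₁ ∣ pe := by
          apply orderOf_dvd_of_pow_eq_one
          rw [ha₁, ← zpow_natCast (a ^ (v * (m : ℤ))) pe, ← zpow_mul]
          have hexp : v * (m : ℤ) * pe = (n : ℤ) * v := by
            push_cast [← hpem]
            ring
          rw [hexp, zpow_mul, hzn, one_zpow]
        have hoa₂ : orderOf a₂ ∣ m := by
          apply orderOf_dvd_of_pow_eq_one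
          rw [ha₂, ← zpow_natCast (a ^ (u * (pe : ℤ))) m, ← zpow_mul]
          have hexp : u * (pe : ℤ) * m = (n : ℤ) * u := by
            push_cast [← hpem]
            ring
          rw [hexp, zpow_mul, hzn, one_zpow]
        have hlt₁ : orderOf a₁ < n := by
          have h1' : orderOf a₁ ≤ pe := Nat.le_of_dvd (by omega) hoa₁
          nlinarith
        have hlt₂ : orderOf a₂ < n := by
          have h2' : orderOf a₂ ≤ m := Nat.le_of_dvd (by omega) hoa₂
          nlinarith
        have hmem₁ := ih (orderOf a₁) hlt₁ a₁ rfl g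
        have hmem₂ := ih (orderOf a₂) hlt₂ a₂ rfl (φ a₁ g)
        have hsplit : g⁻¹ * φ a g =
            (g⁻¹ * φ a₁ g) * ((φ a₁ g)⁻¹ * φ a₂ (φ a₁ g)) := by
          have hy : φ a₂ (φ a₁ g) = φ a g := by
            rw [← h21, map_mul, MulAut.mul_apply]
          rw [hy]
          group
        rw [hsplit]
        exact mul_mem hmem₁ hmem₂
  apply le_antisymm
  · apply (Subgroup.closure_le _).mpr
    rintro _ ⟨x, hx, a, rfl⟩
    exact mul_mem (inv_mem hx) (hinv a x hx)
  · rw [hGA]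
    apply (Subgroup.closure_le _).mpr
    rintro _ ⟨g, a, rfl⟩
    exact key (orderOf a) a rfl g
end

section
/- Let A be a noncyclic abelian group of automorphisms of a finite nilpotent group G with gcd(|G|, |A|) = 1. Then G is the product of the centralizers C_G(a) over all nontrivial elements a of A: G = ∏_{a ∈ A, a ≠ 1} C_G(a). -/
/-!
Induct along the upper central series, so that it suffices to treat an abelian section `M` and to
lift fixed points from `G ⧸ Z(G)`. Since `A` is noncyclic it contains `V ≅ C_q × C_q`; the `q + 1`
subgroups `L` of order `q` of `V` give `∏_L N_L(z) = z ^ q * N_V(z)` for the norms on `M`, each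
factor is fixed by a nontrivial element of `V`, and `z ↦ z ^ q` is bijective on `M`.
A coset `g Z(G)` fixed by `a` yields the cocycle value `g⁻¹ (a • g) ∈ Z(G)` of norm `1`, which is a
coboundary since `|Z(G)|` is coprime to `|A|`; correcting `g` by it gives a genuine fixed point.
-/

open Function Finset Multiplicative
open scoped IsMulCommutative

lemma mem_autFixed {G : Type*} [Group G] {f : MulAut G} {x : G} :
    x ∈ autFixed f ↔ f x = x := Iff.rfl

section FixedSpan

variable {A G M : Type*} [Monoid A] [Group G] [Group M]

def fixedSpan (φ : A →* MulAut G) : Subgroup G :=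
  Subgroup.closure {g | ∃ a, a ≠ 1 ∧ g ∈ autFixed (φ a)}

variable {φ : A →* MulAut G}

lemma mem_fixedSpan_of_mem_autFixed {a : A} (ha : a ≠ 1) {g : G} (hg : g ∈ autFixed (φ a)) :
    g ∈ fixedSpan φ :=
  Subgroup.subset_closure ⟨a, ha, hg⟩

lemma exists_list_of_mem_fixedSpan {g : G} (hg : g ∈ fixedSpan φ) :
    ∃ l : List G, (∀ x ∈ l, ∃ a : A, a ≠ 1 ∧ x ∈ autFixed (φ a)) ∧ l.prod = g := by
  rw [fixedSpan, ← Subgroup.mem_toSubmonoid, Subgroup.closure_toSubmonoid] at hg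
  obtain ⟨l, hl, rfl⟩ := Submonoid.exists_list_of_mem_closure hg
  refine ⟨l, fun x hx => ?_, rfl⟩
  rcases hl x hx with h | ⟨a, ha, hx⟩
  · exact h
  · exact ⟨a, ha, by simpa using inv_mem hx⟩

lemma map_fixedSpan_le {ψ : A →* MulAut M} (f : M →* G) (hf : ∀ a x, f (ψ a x) = φ a (f x)) :
    (fixedSpan ψ).map f ≤ fixedSpan φ := by
  rw [Subgroup.map_le_iff_le_comap, fixedSpan, Subgroup.closure_le]
  rintro x ⟨a, ha, hx⟩
  exact mem_fixedSpan_of_mem_autFixed ha (by rw [mem_autFixed, ← hf, mem_autFixed.mp hx])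

end FixedSpan

section Lines

variable {q : ℕ} [Fact q.Prime]

/-- The `q + 1` lines of `(ZMod q)²` cover the origin `q + 1` times and every other point once. -/
lemma prod_lines_mul_prod_line {M : Type*} [CommMonoid M] (f : ZMod q × ZMod q → M) :
    (∏ c : ZMod q, ∏ t : ZMod q, f (t • (1, c))) * ∏ t : ZMod q, f (t • (0, 1)) =
      f 0 ^ q * ∏ v, f v := by
  have hrow (t : ZMod q) (ht : t ≠ 0) : ∏ c, f (t, t * c) = ∏ s, f (t, s) :=
    Fintype.prod_equiv (Equiv.mulLeft₀ t ht) _ _ fun _ => rfl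
  simp only [Prod.smul_mk, smul_eq_mul, mul_one, mul_zero]
  rw [Finset.prod_comm, Fintype.prod_prod_type, ← Finset.mul_prod_erase _ _ (mem_univ 0),
    ← Finset.mul_prod_erase univ (fun t => ∏ s, f (t, s)) (mem_univ 0),
    Finset.prod_congr rfl fun t ht => hrow t (ne_of_mem_erase ht)]
  simp only [zero_mul, prod_const, card_univ, ZMod.card, Prod.mk_zero_zero]
  ac_rfl

variable {M : Type*} [CommGroup M]

lemma prod_smul_mem_autFixed {V : Type*} [AddCommGroup V] [Module (ZMod q) V]
    (ρ : Multiplicative V →* MulAut M) (u : V) (z : M) :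
    ∏ t : ZMod q, ρ (ofAdd (t • u)) z ∈ autFixed (ρ (ofAdd u)) := by
  rw [mem_autFixed, map_prod]
  refine Fintype.prod_equiv (Equiv.addRight 1) _ _ fun t => ?_
  rw [← MulAut.mul_apply, ← map_mul, ← ofAdd_add, Equiv.coe_addRight, add_smul, one_smul, add_comm]

lemma prod_mem_autFixed {V : Type*} [Group V] [Fintype V] (ρ : V →* MulAut M) (u : V) (z : M) :
    ∏ v, ρ v z ∈ autFixed (ρ u) := by
  rw [mem_autFixed, map_prod]
  exact Fintype.prod_equiv (Equiv.mulLeft u) _ _ fun v => by rw [← MulAut.mul_apply, ← map_mul]; rfl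

theorem fixedSpan_eq_top_of_commGroup {A : Type*} [Monoid A] (hq : (Nat.card M).Coprime q)
    (φ : A →* MulAut M) {ε : Multiplicative (ZMod q × ZMod q) →* A} (hε : Injective ε) :
    fixedSpan φ = ⊤ := by
  set ρ := φ.comp ε
  have hfix {u : ZMod q × ZMod q} (hu : u ≠ 0) {x : M} (hx : x ∈ autFixed (ρ (ofAdd u))) :
      x ∈ fixedSpan φ :=
    mem_fixedSpan_of_mem_autFixed ((map_ne_one_iff ε hε).mpr (by simpa using hu)) hx
  have hpow (z : M) : z ^ q ∈ fixedSpan φ := by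
    have key := prod_lines_mul_prod_line (fun v => ρ (ofAdd v) z)
    simp only [ofAdd_zero, map_one, MulAut.one_apply] at key
    rw [← mul_inv_eq_iff_eq_mul.mpr key]
    refine mul_mem (mul_mem (prod_mem fun c _ => hfix ?_ (prod_smul_mem_autFixed ρ _ z))
      (hfix ?_ (prod_smul_mem_autFixed ρ _ z))) (inv_mem ?_)
    · simp
    · simp
    · rw [Fintype.prod_equiv ofAdd _ (fun v => ρ v z) fun _ => rfl]
      exact hfix (u := (0, 1)) (by simp) (prod_mem_autFixed ρ _ z)
  refine eq_top_iff.mpr fun z _ => ?_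
  obtain ⟨y, rfl⟩ := hq.pow_left_bijective.2 z
  exact hpow y

end Lines

section Lifting

variable {M : Type*} [CommGroup M]

/-- A coprime analogue of Hilbert's Theorem 90. -/
lemma exists_apply_eq_mul_inv_of_prod_eq_one (σ : MulAut M) {m : ℕ} (hm : (Nat.card M).Coprime m)
    {c : M} (hc : ∏ k ∈ range m, (σ ^ k) c = 1) : ∃ w, σ w = w * c⁻¹ := by
  set ν : ℕ → M := fun k => ∏ j ∈ range k, (σ ^ j) c
  have hν (k : ℕ) : σ (ν k) = c⁻¹ * ν (k + 1) := by
    simp only [ν, map_prod, prod_range_succ', pow_zero, MulAut.one_apply, ← MulAut.mul_apply,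
      ← pow_succ']
    rw [mul_comm _ c, inv_mul_cancel_left]
  have hshift : ∏ k ∈ range m, ν (k + 1) = ∏ k ∈ range m, ν k := by
    have h := (prod_range_succ' ν m).symm.trans (prod_range_succ ν m)
    simpa [ν, hc] using h
  obtain ⟨w, hw⟩ := hm.pow_left_bijective.2 (∏ k ∈ range m, ν k)
  refine ⟨w, hm.pow_left_bijective.1 ?_⟩
  simp only at hw ⊢
  rw [← map_pow, hw, mul_pow, hw, map_prod, prod_congr rfl fun k _ => hν k, prod_mul_distrib,
    prod_const, card_range, hshift, mul_comm, inv_pow]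

end Lifting

def MulAut.quotient {G : Type*} [Group G] (H : Subgroup G) [H.Characteristic] :
    MulAut G →* MulAut (G ⧸ H) where
  toFun e := QuotientGroup.congr H H e (Subgroup.characteristic_iff_map_eq.mp ‹_› e)
  map_one' := by
    ext x
    induction x using QuotientGroup.induction_on
    rfl
  map_mul' e f := by
    ext x
    induction x using QuotientGroup.induction_on
    rfl

section Quotient

variable {A G : Type*} [Group A] [Group G] (φ : A →* MulAut G) (H : Subgroup G) [H.Characteristic]
  [IsMulCommutative H]

lemma exists_mul_mem_autFixed_of_mk_mem_autFixed (hcop : (Nat.card H).Coprime (Nat.card A))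
    {a : A} {g : G} (hg : (g : G ⧸ H) ∈ autFixed (MulAut.quotient H (φ a))) :
    ∃ h ∈ H, g * h ∈ autFixed (φ a) := by
  set c : H := ⟨g⁻¹ * φ a g, QuotientGroup.eq.mp hg.symm⟩
  set σ := MulAut.characteristic H (φ a)
  have hnorm (n : ℕ) : ((∏ k ∈ range n, (σ ^ k) c : H) : G) = g⁻¹ * φ (a ^ n) g := by
    induction n with
    | zero => simp
    | succ n ih =>
      rw [prod_range_succ, Subgroup.coe_mul, ih, ← map_pow, ← map_pow]
      simp only [MulAut.characteristic_apply_apply_coe, c, map_mul, map_inv, pow_succ,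
        MulAut.mul_apply]
      group
  obtain ⟨w, hw⟩ := exists_apply_eq_mul_inv_of_prod_eq_one σ hcop
    (Subtype.ext (by rw [hnorm, pow_card_eq_one', map_one, MulAut.one_apply, inv_mul_cancel]; rfl))
  refine ⟨w, w.2, ?_⟩
  have hw' : φ a w = w * (c : G)⁻¹ := congrArg Subtype.val hw
  have hcw : (c : G) * w = w * c := congrArg Subtype.val (mul_comm c w)
  have hg' : φ a g = g * c := (mul_inv_cancel_left g _).symm
  clear_value c
  rw [mem_autFixed, map_mul, hw', hg', mul_assoc, ← mul_assoc (c : G), hcw, mul_assoc,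
    mul_inv_cancel, mul_one]

theorem fixedSpan_eq_top_of_quotient (hcop : (Nat.card H).Coprime (Nat.card A))
    (hH : fixedSpan ((MulAut.characteristic H).comp φ) = ⊤)
    (hQ : fixedSpan ((MulAut.quotient H).comp φ) = ⊤) : fixedSpan φ = ⊤ := by
  have hHle : H ≤ fixedSpan φ := by
    simpa [hH, ← MonoidHom.range_eq_map] using
      map_fixedSpan_le (ψ := (MulAut.characteristic H).comp φ) H.subtype fun _ _ => rfl
  have hlift :
      fixedSpan ((MulAut.quotient H).comp φ) ≤ (fixedSpan φ).map (QuotientGroup.mk' H) := by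
    refine (Subgroup.closure_le _).mpr ?_
    rintro y ⟨a, ha, hy⟩
    induction y using QuotientGroup.induction_on with | H g => ?_
    obtain ⟨h, hh, hgh⟩ := exists_mul_mem_autFixed_of_mk_mem_autFixed φ H hcop hy
    exact ⟨g * h, mem_fixedSpan_of_mem_autFixed ha hgh, by simpa using hh⟩
  refine eq_top_iff.mpr fun g _ => ?_
  obtain ⟨s, hs, hsg⟩ := hlift (hQ ▸ Subgroup.mem_top (g : G ⧸ H))
  rw [← mul_inv_cancel_left s g]
  exact mul_mem hs (hHle (QuotientGroup.eq.mp hsg))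

end Quotient

theorem fixedSpan_eq_top_of_isNilpotent {A : Type*} [Group A] {q : ℕ} [Fact q.Prime]
    {ε : Multiplicative (ZMod q × ZMod q) →* A} (hε : Injective ε) (G : Type*) [Group G]
    [Group.IsNilpotent G] (φ : A →* MulAut G) (hcop : (Nat.card G).Coprime (Nat.card A)) :
    fixedSpan φ = ⊤ := by
  have hqA : q ∣ Nat.card A :=
    (dvd_mul_right q q).trans (by simpa using Subgroup.card_dvd_of_injective ε hε)
  refine Group.nilpotent_center_quotient_ind (P := fun G _ _ => ∀ φ : A →* MulAut G,
    (Nat.card G).Coprime (Nat.card A) → fixedSpan φ = ⊤) G (fun _ _ _ _ _ => Subsingleton.elim _ _)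
    (fun G _ _ ih φ hcop => ?_) φ hcop
  have hZ := hcop.coprime_dvd_left (Subgroup.card_subgroup_dvd_card (Subgroup.center G))
  exact fixedSpan_eq_top_of_quotient φ _ hZ
    (fixedSpan_eq_top_of_commGroup (hZ.coprime_dvd_right hqA) _ hε)
    (ih _ (hcop.coprime_dvd_left (Subgroup.card_quotient_dvd_card _)))

lemma pow_zmod_val_add {M : Type*} [Monoid M] {x : M} {q : ℕ} [NeZero q] (hx : x ^ q = 1)
    (s t : ZMod q) :
    x ^ (s + t).val = x ^ s.val * x ^ t.val := by
  rw [ZMod.val_add, ← pow_eq_pow_mod _ hx, pow_add]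

lemma pow_zmod_val_mul {M : Type*} [Monoid M] {x : M} {q : ℕ} [NeZero q] (hx : x ^ q = 1)
    (s t : ZMod q) :
    x ^ (s * t).val = (x ^ s.val) ^ t.val := by
  rw [ZMod.val_mul, ← pow_eq_pow_mod _ hx, pow_mul]

section Noncyclic

variable {A : Type*} [CommGroup A]

lemma card_ker_powMonoidHom_mul_le [Finite A] (m n : ℕ) :
    Nat.card (powMonoidHom (m * n) : A →* A).ker ≤
      Nat.card (powMonoidHom m : A →* A).ker * Nat.card (powMonoidHom n : A →* A).ker := by
  set K := (powMonoidHom (m * n) : A →* A).ker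
  set f : K →* A := (powMonoidHom m).comp K.subtype
  have hker : Nat.card f.ker ≤ Nat.card (powMonoidHom m : A →* A).ker :=
    Nat.card_le_card_of_injective (fun x => ⟨x.1.1, x.2⟩) fun x y h => by
      ext; simpa using congrArg Subtype.val h
  have hrange : Nat.card f.range ≤ Nat.card (powMonoidHom n : A →* A).ker := by
    refine Subgroup.card_le_of_le ?_
    rintro _ ⟨x, rfl⟩
    show ((x : A) ^ m) ^ n = 1
    rw [← pow_mul]
    exact x.2
  calc Nat.card K = Nat.card f.ker * Nat.card f.range := by
        rw [← Subgroup.index_ker, Subgroup.card_mul_index]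
    _ ≤ _ := Nat.mul_le_mul hker hrange

lemma exists_prime_lt_card_ker_powMonoidHom [Finite A] (hA : ¬IsCyclic A) :
    ∃ q, q.Prime ∧ q < Nat.card (powMonoidHom q : A →* A).ker := by
  by_contra! h
  have hle (n : ℕ) (hn : 0 < n) : Nat.card (powMonoidHom n : A →* A).ker ≤ n := by
    induction n using Nat.recOnMul with
    | zero => omega
    | one => simp
    | prime p hp => exact h p hp
    | mul a b iha ihb =>
      exact (card_ker_powMonoidHom_mul_le a b).trans
        (Nat.mul_le_mul (iha (Nat.pos_of_mul_pos_right hn)) (ihb (Nat.pos_of_mul_pos_left hn)))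
  classical
  have := Fintype.ofFinite A
  refine hA (isCyclic_of_card_pow_eq_one_le fun n hn => ?_)
  convert hle n hn using 1
  rw [← Fintype.card_subtype, ← Nat.card_eq_fintype_card]
  exact Nat.card_congr (Equiv.subtypeEquivRight fun x => by simp)

lemma exists_injective_of_notMem_zpowers {q : ℕ} [Fact q.Prime] {a b : A} (ha : a ^ q = 1)
    (hb : b ^ q = 1) (ha1 : a ≠ 1) (hab : b ∉ Subgroup.zpowers a) :
    ∃ ε : Multiplicative (ZMod q × ZMod q) →* A, Injective ε := by
  refine ⟨MonoidHom.mk' (fun v => a ^ v.toAdd.1.val * b ^ v.toAdd.2.val) fun v w => ?_, ?_⟩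
  · simp only [toAdd_mul, Prod.fst_add, Prod.snd_add, pow_zmod_val_add ha, pow_zmod_val_add hb]
    exact mul_mul_mul_comm _ _ _ _
  rw [injective_iff_map_eq_one]
  rintro ⟨s, t⟩ hst
  replace hst : a ^ s.val * b ^ t.val = 1 := hst
  have : Fact (1 < q) := ⟨(Fact.out : q.Prime).one_lt⟩
  have ht : t = 0 := by
    by_contra ht
    have hbt : b ^ t.val ∈ Subgroup.zpowers a := by
      rw [eq_inv_of_mul_eq_one_right hst]
      exact inv_mem (pow_mem (Subgroup.mem_zpowers a) _)
    refine hab ?_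
    simpa [← pow_zmod_val_mul hb, mul_inv_cancel₀ ht, ZMod.val_one] using pow_mem hbt t⁻¹.val
  subst ht
  rw [ZMod.val_zero, pow_zero, mul_one, ← orderOf_dvd_iff_pow_eq_one,
    orderOf_eq_prime ha ha1, ← ZMod.natCast_eq_zero_iff, ZMod.natCast_zmod_val] at hst
  subst hst
  rfl

lemma exists_injective_zmod_prod [Finite A] (hA : ¬IsCyclic A) :
    ∃ q, q.Prime ∧ ∃ ε : Multiplicative (ZMod q × ZMod q) →* A, Injective ε := by
  obtain ⟨q, hq, hlt⟩ := exists_prime_lt_card_ker_powMonoidHom hA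
  have := Fact.mk hq
  set K := (powMonoidHom q : A →* A).ker
  obtain ⟨a, haK, ha1⟩ : ∃ a ∈ K, a ≠ 1 := (K.bot_or_exists_ne_one).resolve_left fun h => by
    simp [h, hq.ne_zero] at hlt
  have hK : ¬K ≤ Subgroup.zpowers a := fun hle => (Subgroup.card_le_of_le hle).not_gt (by
    rwa [Nat.card_zpowers, orderOf_eq_prime haK ha1])
  obtain ⟨b, hbK, hb⟩ := SetLike.not_le_iff_exists.mp hK
  exact ⟨q, hq, exists_injective_of_notMem_zpowers haK hbK ha1 hb⟩

end Noncyclic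

theorem stmt4_general {A G : Type*} [CommGroup A] [Group G] [Finite A]
    [Group.IsNilpotent G] (hnc : ¬IsCyclic A)
    (φ : A →* MulAut G) (hcop : Nat.Coprime (Nat.card G) (Nat.card A)) :
    ∀ g : G, ∃ l : List G,
      (∀ x ∈ l, ∃ a : A, a ≠ 1 ∧ x ∈ autFixed (φ a)) ∧ l.prod = g := by
  obtain ⟨q, hq, ε, hε⟩ := exists_injective_zmod_prod hnc
  have := Fact.mk hq
  intro g
  exact exists_list_of_mem_fixedSpan
    (fixedSpan_eq_top_of_isNilpotent hε G φ hcop ▸ Subgroup.mem_top g)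

/-- If a noncyclic abelian `A` acts coprimely on a finite nilpotent `G`, then
`G = ∏_{a ∈ A#} C_G(a)`: every element is a product of elements each fixed by
some nontrivial `a ∈ A`. -/
theorem stmt4 {A G : Type*} [CommGroup A] [Group G] [Finite A] [Finite G]
    [Group.IsNilpotent G] (hnc : ¬IsCyclic A)
    (φ : A →* MulAut G) (hcop : Nat.Coprime (Nat.card G) (Nat.card A)) :
    ∀ g : G, ∃ l : List G,
      (∀ x ∈ l, ∃ a : A, a ≠ 1 ∧ x ∈ autFixed (φ a)) ∧ l.prod = g :=
  stmt4_general hnc φ hcop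
end

section
/- Let G be a group with normal subgroups P (a p-group) and N ≤ P, and let H act on P with P = [P, H] and N normal and H-invariant. If |[N, H]| = p^n, then N is contained in the (2n+1)-st term Z_{2n+1}(P) of the upper central series of P. -/
/-!
Write `Zⱼ` for the `j`-th term of the upper central series of `P`, viewed in `G`. If
`[N, H] ≤ Zⱼ`, then the three subgroups lemma modulo `Zⱼ` gives `[P, H, N] ≤ Zⱼ`, and
`[P, H] = P` turns this into `N ≤ Zⱼ₊₁`. So it suffices that `|[N, H]| ∣ pᵐ` forces
`[N, H] ≤ Z₂ₘ`, which goes by induction on `m`. In the inductive step descend along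
`N, [N, P], [N, P, P], …`: as long as `[N, P]` has the same commutator with `H` as `N`,
replace `N` by `[N, P]`, which is lower in the upper central series. Otherwise
`|[N, P, H]| ∣ pᵐ`, so `[N, P] ≤ Z₂ₘ₊₁` by induction, whence `[N, H] ≤ N ≤ Z₂ₘ₊₂`.
-/

namespace Subgroup

variable {G : Type*} [Group G]

theorem commutator_commutator_le_of_rotate {A B C K : Subgroup G} [K.Normal]
    (h1 : ⁅⁅B, C⁆, A⁆ ≤ K) (h2 : ⁅⁅C, A⁆, B⁆ ≤ K) : ⁅⁅A, B⁆, C⁆ ≤ K := by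
  rw [← QuotientGroup.ker_mk' K, ← map_eq_bot_iff] at h1 h2 ⊢
  rw [map_commutator, map_commutator] at h1 h2 ⊢
  exact commutator_commutator_eq_bot_of_rotate h1 h2

theorem eq_of_le_of_card_dvd_prime_pow_succ {p m : ℕ} (hp : p.Prime)
    {A B : Subgroup G} (hAB : A ≤ B) (hB : Nat.card B ∣ p ^ (m + 1))
    (hA : ¬ Nat.card A ∣ p ^ m) : A = B := by
  have : Finite B :=
    Nat.finite_of_card_ne_zero (ne_zero_of_dvd_ne_zero (pow_pos hp.pos _).ne' hB)
  obtain ⟨i, hi, hAi⟩ := (Nat.dvd_prime_pow hp).mp ((card_dvd_of_le hAB).trans hB)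
  have hi : i = m + 1 := by
    by_contra hne
    exact hA (hAi ▸ pow_dvd_pow p (by omega))
  refine eq_of_le_of_card_ge hAB ?_
  rw [hAi, hi]
  exact Nat.le_of_dvd (pow_pos hp.pos _) hB

def upperCentralSeriesIn (P : Subgroup G) (j : ℕ) : Subgroup G :=
  (upperCentralSeries P j).map P.subtype

section UpperCentralSeriesIn

variable (P : Subgroup G)

instance upperCentralSeriesIn_normal [P.Normal] (j : ℕ) : (P.upperCentralSeriesIn j).Normal :=
  ConjAct.normal_of_characteristic_of_normal

theorem upperCentralSeriesIn_zero : P.upperCentralSeriesIn 0 = ⊥ := by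
  rw [upperCentralSeriesIn, upperCentralSeries_zero, map_bot]

theorem upperCentralSeriesIn_le (j : ℕ) : P.upperCentralSeriesIn j ≤ P :=
  map_subtype_le _

theorem exists_upperCentralSeriesIn_eq [Group.IsNilpotent P] :
    ∃ d, P.upperCentralSeriesIn d = P := by
  obtain ⟨d, hd⟩ := Group.IsNilpotent.nilpotent P
  exact ⟨d, by rw [upperCentralSeriesIn, hd, ← MonoidHom.range_eq_map, range_subtype]⟩

variable {P}

theorem le_upperCentralSeriesIn_succ_iff {S : Subgroup G} (hSP : S ≤ P) {j : ℕ} :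
    S ≤ P.upperCentralSeriesIn (j + 1) ↔ ⁅S, P⁆ ≤ P.upperCentralSeriesIn j := by
  have hmem (x : P) (i : ℕ) :
      (x : G) ∈ P.upperCentralSeriesIn i ↔ x ∈ upperCentralSeries P i :=
    mem_map_iff_mem P.subtype_injective
  rw [commutator_le]
  constructor
  · intro h x hx y hy
    have hx' := (hmem (⟨x, hSP hx⟩ : P) (j + 1)).mp (h hx)
    exact (hmem _ j).mpr (mem_upperCentralSeries_succ_iff.mp hx' ⟨y, hy⟩)
  · intro h x hx
    refine (hmem (⟨x, hSP hx⟩ : P) (j + 1)).mpr ?_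
    exact mem_upperCentralSeries_succ_iff.mpr fun y => (hmem _ j).mp (h x hx y y.2)

end UpperCentralSeriesIn

section

variable {P H : Subgroup G} [P.Normal] (hPH : ⁅P, H⁆ = P)
include hPH

theorem le_upperCentralSeriesIn_succ_of_commutator_le {N : Subgroup G} [N.Normal]
    (hNP : N ≤ P) {j : ℕ} (h : ⁅N, H⁆ ≤ P.upperCentralSeriesIn j) :
    N ≤ P.upperCentralSeriesIn (j + 1) := by
  have hNP_eq : ⁅N, P⁆ = ⁅⁅P, H⁆, N⁆ := by rw [hPH, commutator_comm]
  rw [le_upperCentralSeriesIn_succ_iff hNP, hNP_eq]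
  refine commutator_commutator_le_of_rotate ?_ ?_
  · rw [commutator_comm H N]
    exact (commutator_mono h le_rfl).trans (commutator_le_left _ _)
  · exact (commutator_mono (commutator_le_left N P) le_rfl).trans h

theorem commutator_le_upperCentralSeriesIn_succ_of_card_dvd {p m : ℕ} (hp : p.Prime)
    (ih : ∀ N : Subgroup G, [N.Normal] → N ≤ P → Nat.card (⁅N, H⁆ : Subgroup G) ∣ p ^ m →
      ⁅N, H⁆ ≤ P.upperCentralSeriesIn (2 * m))
    (d : ℕ) (N : Subgroup G) [N.Normal] (hNd : N ≤ P.upperCentralSeriesIn d)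
    (hN : Nat.card (⁅N, H⁆ : Subgroup G) ∣ p ^ (m + 1)) :
    ⁅N, H⁆ ≤ P.upperCentralSeriesIn (2 * (m + 1)) := by
  induction d generalizing N with
  | zero =>
    rw [upperCentralSeriesIn_zero, le_bot_iff] at hNd
    simp [hNd]
  | succ d ihd =>
    have hNP : N ≤ P := hNd.trans (upperCentralSeriesIn_le P _)
    have hN₁d : ⁅N, P⁆ ≤ P.upperCentralSeriesIn d :=
      (le_upperCentralSeriesIn_succ_iff hNP).mp hNd
    have hN₁P : ⁅N, P⁆ ≤ P := (commutator_le_left N P).trans hNP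
    have hN₁H : ⁅⁅N, P⁆, H⁆ ≤ ⁅N, H⁆ := commutator_mono (commutator_le_left N P) le_rfl
    by_cases hdvd : Nat.card (⁅⁅N, P⁆, H⁆ : Subgroup G) ∣ p ^ m
    · have hN₁ := le_upperCentralSeriesIn_succ_of_commutator_le hPH hN₁P (ih _ hN₁P hdvd)
      exact (commutator_le_left N H).trans ((le_upperCentralSeriesIn_succ_iff hNP).mpr hN₁)
    · have heq := eq_of_le_of_card_dvd_prime_pow_succ hp hN₁H hN hdvd
      exact heq ▸ ihd _ hN₁d (heq ▸ hN)

theorem commutator_le_upperCentralSeriesIn_of_card_dvd [Group.IsNilpotent P] {p : ℕ}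
    (hp : p.Prime) (m : ℕ) (N : Subgroup G) [N.Normal] (hNP : N ≤ P)
    (hN : Nat.card (⁅N, H⁆ : Subgroup G) ∣ p ^ m) :
    ⁅N, H⁆ ≤ P.upperCentralSeriesIn (2 * m) := by
  induction m generalizing N with
  | zero =>
    rw [pow_zero, Nat.dvd_one, card_eq_one] at hN
    exact hN ▸ bot_le
  | succ m ih =>
    obtain ⟨d, hd⟩ := exists_upperCentralSeriesIn_eq P
    exact commutator_le_upperCentralSeriesIn_succ_of_card_dvd hPH hp (fun N _ ↦ ih N) d N
      (hNP.trans hd.ge) hN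

end

end Subgroup

/-- If `P = [P, H]`, `N ≤ P` with `P, N` normal, and `|[N, H]| = pⁿ`, then
`N ≤ Z_{2n+1}(P)`. -/
theorem stmt9 {G : Type*} [Group G] {p n : ℕ} (hp : p.Prime)
    (P N H : Subgroup G) [P.Normal] [N.Normal] [Finite P]
    (hNP : N ≤ P) (hPp : IsPGroup p P)
    (hPH : ⁅P, H⁆ = P) (hNH : Nat.card (⁅N, H⁆ : Subgroup G) = p ^ n) :
    ∀ x (hx : x ∈ N), (⟨x, hNP hx⟩ : P) ∈ upperCentralSeries P (2 * n + 1) := by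
  have : Fact p.Prime := ⟨hp⟩
  have : Group.IsNilpotent P := hPp.isNilpotent
  have hN : N ≤ P.upperCentralSeriesIn (2 * n + 1) :=
    Subgroup.le_upperCentralSeriesIn_succ_of_commutator_le hPH hNP
      (Subgroup.commutator_le_upperCentralSeriesIn_of_card_dvd hPH hp n N hNP hNH.dvd)
  exact fun x hx ↦ (Subgroup.mem_map_iff_mem P.subtype_injective).mp (hN hx)
end

section
/- Let p be a prime and N a finite p-group of rank r (every subgroup of N can be generated by r elements). If p is odd and N has exponent p, or p = 2 and N has exponent dividing 4, then |N| ≤ p^s for some number s depending only on r. -/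
/-! Take `A` maximal among the abelian normal subgroups of the `p`-group `N`. Then `A` is its own
centralizer, so `N / A` embeds into `Aut A` and `|N| ≤ |A| · |Aut A|`. As `A` is abelian of exponent
dividing `p²` and generated by `r` elements, `|A| ≤ p^(2r)`, and an automorphism of `A` is determined
by the images of those generators, so `|Aut A| ≤ |A|^r`. Hence `|N| ≤ p^(2r(r+1))`. -/

/-- `rankAtMost G r` : every subgroup of `G` is generated by at most `r` elements. -/
def rankAtMost (G : Type*) [Group G] (r : ℕ) : Prop :=
  ∀ K : Subgroup G, ∃ S : Finset G, S.card ≤ r ∧ Subgroup.closure (S : Set G) = K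

open Subgroup

theorem rankAtMost.rank_le {G : Type*} [Group G] {r : ℕ} (h : rankAtMost G r)
    (H : Subgroup G) [Group.FG H] : Group.rank H ≤ r := by
  obtain ⟨S, hS, rfl⟩ := h H
  exact (rank_closure_finset_le_card S).trans hS

theorem Group.card_mulAut_le_card_pow_rank (G : Type*) [Group G] [Finite G] :
    Nat.card (MulAut G) ≤ Nat.card G ^ Group.rank G := by
  obtain ⟨S, hcard, hS⟩ := Group.rank_spec G
  have hinj : Function.Injective fun (φ : MulAut G) (s : S) => φ s := fun φ ψ h =>
    MulEquiv.toMonoidHom_injective <|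
      MonoidHom.eq_of_eqOn_dense hS fun s hs => congrFun h ⟨s, hs⟩
  calc Nat.card (MulAut G) ≤ Nat.card (S → G) := Nat.card_le_card_of_injective _ hinj
    _ = Nat.card G ^ Group.rank G := by simp [Nat.card_fun, hcard]

theorem CommGroup.card_le_exponent_pow_rank (G : Type*) [CommGroup G] [Finite G] :
    Nat.card G ≤ Monoid.exponent G ^ Group.rank G := by
  obtain ⟨S, hcard, hS⟩ := Group.rank_spec G
  set e := Monoid.exponent G
  have he : 0 < e := Nat.pos_of_ne_zero Monoid.exponent_ne_zero_of_finite
  have hsurj : Function.Surjective fun c : S → Fin e => ∏ s : S, (s : G) ^ (c s : ℕ) := by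
    intro x
    have hx : x ∈ Submonoid.closure (S : Set G) := by
      rw [← closure_toSubmonoid_of_finite, hS]; trivial
    obtain ⟨a, rfl⟩ := Submonoid.mem_closure_iff_of_fintype.1 hx
    exact ⟨fun s => ⟨a s % e, Nat.mod_lt _ he⟩,
      Finset.prod_congr rfl fun s _ => (Monoid.pow_eq_mod_exponent _).symm⟩
  calc Nat.card G ≤ Nat.card (S → Fin e) := Nat.card_le_card_of_surjective _ hsurj
    _ = e ^ Group.rank G := by simp [Nat.card_fun, hcard]

theorem MulAut.ker_conjNormal {G : Type*} [Group G] (H : Subgroup G) [H.Normal] :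
    (MulAut.conjNormal : G →* MulAut H).ker = centralizer (H : Set G) := by
  ext g
  simp only [MonoidHom.mem_ker, MulEquiv.ext_iff, Subtype.ext_iff, MulAut.conjNormal_apply,
    MulAut.one_apply, Subtype.forall, mem_centralizer_iff, SetLike.mem_coe,
    mul_inv_eq_iff_eq_mul]
  exact forall₂_congr fun _ _ => eq_comm

theorem Subgroup.card_le_card_mulAut_mul_card_centralizer {G : Type*} [Group G] [Finite G]
    (H : Subgroup G) [H.Normal] :
    Nat.card G ≤ Nat.card (MulAut H) * Nat.card (centralizer (H : Set G)) := by
  have hker := MulAut.ker_conjNormal H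
  rw [card_eq_card_quotient_mul_card_subgroup (MulAut.conjNormal : G →* MulAut H).ker, ← hker]
  exact Nat.mul_le_mul_right _
    (Nat.card_le_card_of_injective _ (QuotientGroup.kerLift_injective _))

theorem IsPGroup.exists_ne_one_mem_center_of_normal {p : ℕ} [Fact p.Prime] {G : Type*} [Group G]
    [Finite G] (hG : IsPGroup p G) {K : Subgroup G} [K.Normal] (hK : K ≠ ⊥) :
    ∃ z ∈ K, z ∈ center G ∧ z ≠ 1 := by
  have hdvd : p ∣ Nat.card K :=
    (hG.to_subgroup K).card_eq_or_dvd.resolve_left fun h1 => hK (eq_bot_of_card_eq K h1)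
  have hfix : (1 : K) ∈ MulAction.fixedPoints (ConjAct G) K := fun g => by ext; simp
  obtain ⟨z, hz, hz1⟩ := (hG.of_equiv ConjAct.toConjAct)
    |>.exists_fixed_point_of_prime_dvd_card_of_fixed_point K hdvd hfix
  refine ⟨z, z.2, mem_center_iff.2 fun g => ?_, fun h => hz1 (Subtype.ext h.symm)⟩
  have := congrArg Subtype.val (hz (ConjAct.toConjAct g))
  rwa [ConjAct.Subgroup.val_conj_smul, ConjAct.smul_def, ConjAct.ofConjAct_toConjAct,
    mul_inv_eq_iff_eq_mul] at this

theorem Subgroup.normal_of_le_center {G : Type*} [Group G] {H : Subgroup G} (h : H ≤ center G) :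
    H.Normal :=
  ⟨fun n hn g => by rw [(mem_center_iff.1 (h hn) g)]; simpa⟩

theorem IsPGroup.centralizer_eq_self_of_maximal {p : ℕ} [Fact p.Prime] {G : Type*} [Group G]
    [Finite G] (hG : IsPGroup p G) {A : Subgroup G}
    (hA : Maximal (fun H : Subgroup G => H.Normal ∧ IsMulCommutative H) A) :
    centralizer (A : Set G) = A := by
  obtain ⟨hAn, hAc⟩ := hA.prop
  refine le_antisymm (fun x₀ hx₀ => ?_) (le_centralizer A)
  by_contra hx₀A
  have hK : (centralizer (A : Set G)).map (QuotientGroup.mk' A) ≠ ⊥ := fun h => by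
    have := mem_map_of_mem (QuotientGroup.mk' A) hx₀
    rw [h, mem_bot, QuotientGroup.mk'_apply, QuotientGroup.eq_one_iff] at this
    exact hx₀A this
  obtain ⟨_, ⟨x, hxC, rfl⟩, hz, hz1⟩ :=
    (hG.to_quotient A).exists_ne_one_mem_center_of_normal hK
  -- `x` is central modulo `A` and centralizes `A`, so `⟨A, x⟩` is normal and abelian
  have hB : (zpowers (QuotientGroup.mk' A x)).comap (QuotientGroup.mk' A) = closure (A ∪ {x}) := by
    rw [← MonoidHom.map_zpowers, comap_map_eq, QuotientGroup.ker_mk', Subgroup.closure_union,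
      closure_eq, zpowers_eq_closure, sup_comm]
  have hBn : (closure (A ∪ {x})).Normal := hB ▸ (normal_of_le_center (zpowers_le.2 hz)).comap _
  have hBc : IsMulCommutative (closure (A ∪ {x})) := by
    refine isMulCommutative_closure ?_
    rintro a (ha | rfl) b (hb | rfl)
    · exact setLike_mul_comm ha hb
    · exact mem_centralizer_iff.1 hxC a ha
    · exact (mem_centralizer_iff.1 hxC b hb).symm
    · rfl
  have hAB := hA.eq_of_le ⟨hBn, hBc⟩
    ((closure_eq A).ge.trans (closure_mono Set.subset_union_left))
  exact hz1 ((QuotientGroup.eq_one_iff x).2 (hAB ▸ subset_closure (Or.inr rfl)))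

/-- A finite `p`-group of rank `r` and exponent `p` (`p` odd), or exponent
dividing `4` (`p = 2`), has `r`-bounded order `≤ p^s`. -/
theorem stmt10 (r : ℕ) : ∃ s : ℕ, ∀ (p : ℕ), p.Prime →
    ∀ (N : Type) [Group N] [Finite N], IsPGroup p N → rankAtMost N r →
    ((Odd p ∧ Monoid.exponent N = p) ∨ (p = 2 ∧ Monoid.exponent N ∣ 4)) →
    Nat.card N ≤ p ^ s := by
  refine ⟨2 * r * (r + 1), fun p hp N _ _ hN hrank hexp => ?_⟩
  have : Fact p.Prime := ⟨hp⟩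
  have hexp : Monoid.exponent N ∣ p ^ 2 := by
    rcases hexp with ⟨_, h⟩ | ⟨rfl, h⟩
    · exact h ▸ dvd_pow_self p two_ne_zero
    · exact h
  obtain ⟨A, hA⟩ := (Set.toFinite {H : Subgroup N | H.Normal ∧ IsMulCommutative H})
    |>.exists_maximal ⟨⊥, inferInstance, inferInstance⟩
  obtain ⟨hAn, hAc⟩ := hA.prop
  have hrankA : Group.rank A ≤ r := hrank.rank_le A
  have hexpA : Monoid.exponent A ≤ p ^ 2 := Nat.le_of_dvd (pow_pos hp.pos 2)
    ((Monoid.exponent_dvd_of_monoidHom A.subtype A.subtype_injective).trans hexp)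
  have hcardA : Nat.card A ≤ (p ^ 2) ^ r := by
    open scoped IsMulCommutative in
    calc Nat.card A ≤ Monoid.exponent A ^ Group.rank A := CommGroup.card_le_exponent_pow_rank A
      _ ≤ (p ^ 2) ^ Group.rank A := Nat.pow_le_pow_left hexpA _
      _ ≤ (p ^ 2) ^ r := Nat.pow_le_pow_right (pow_pos hp.pos 2) hrankA
  calc Nat.card N ≤ Nat.card (MulAut A) * Nat.card A :=
        (card_le_card_mulAut_mul_card_centralizer A).trans_eq
          (by rw [hN.centralizer_eq_self_of_maximal hA])
    _ ≤ Nat.card A ^ r * Nat.card A := by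
        gcongr
        exact (Group.card_mulAut_le_card_pow_rank A).trans
          (Nat.pow_le_pow_right Nat.card_pos hrankA)
    _ = Nat.card A ^ (r + 1) := (pow_succ _ _).symm
    _ ≤ ((p ^ 2) ^ r) ^ (r + 1) := Nat.pow_le_pow_left hcardA _
    _ = p ^ (2 * r * (r + 1)) := by ring
end

section
/- Let G be a finite group with γ_∞(G) ≤ F(G) (the nilpotent residual containedin the Fitting subgroup). Let P be a Sylow p-subgroup of γ_∞(G) and H a Hall p'-subgroup of G. Then P = [P, H]. -/
/-!
Write `N = γ_∞(G)`. Every nilpotent normal subgroup lies in `O_p(G) × O_{p'}(G)`, so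
`N = P × Q` with `P = N ∩ O_p(G)` and `Q = N ∩ O_{p'}(G)` normal in `G` and commuting;
projecting `[N, G] = N` onto `P` gives `[P, G] = P`. Since `G/N` is nilpotent, the image of the
Hall `p'`-subgroup `H` is normal there, so `M = HN` is normal of `p`-power index and `G = MS`
for a Sylow `p`-subgroup `S`. Modulo `[P, M]`, `M` centralises `P`, so `P = [P, G] = [P, S]`,
which forces `P` to be trivial in the `p`-group `S`: thus `P = [P, M]`. As `Q` centralises `P`,
`[P, M] ≤ [P, H][P, P]`, and a subgroup of the `p`-group `P` normalised by `P` that supplements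
`[P, P]` is all of `P`.
-/

/-- The nilpotent residual: the last term of the lower central series. -/
def nilRes (G : Type*) [Group G] : Subgroup G := ⨅ n, (⊤ : Subgroup G).lowerCentralSeries n

/-- The Fitting subgroup: the join of all nilpotent normal subgroups. -/
def fitting (G : Type*) [Group G] : Subgroup G :=
  ⨆ H ∈ {H : Subgroup G | H.Normal ∧ Group.IsNilpotent H}, H

open Subgroup
open scoped commutatorElement

variable {G : Type*} [Group G]

theorem Nat.Coprime.of_not_dvd_of_dvd_prime_pow {p a b n : ℕ} (hp : p.Prime) (ha : ¬ p ∣ a)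
    (hb : b ∣ p ^ n) : a.Coprime b :=
  (Nat.Coprime.pow_right n ((Nat.Prime.coprime_iff_not_dvd hp).mpr ha).symm).coprime_dvd_right hb

theorem Commute.mem_of_mul_mem_of_coprime {K : Subgroup G} {a b : G} (hab : Commute a b)
    (hK : a * b ∈ K) {n : ℕ} (hb : b ^ n = 1) (hn : n.Coprime (orderOf a)) : a ∈ K := by
  obtain ⟨m, hm⟩ := exists_pow_eq_self_of_coprime hn
  have hpow : (a * b) ^ n = a ^ n := by rw [hab.mul_pow, hb, mul_one]
  rw [← hm, ← hpow]
  exact pow_mem (pow_mem hK n) m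

namespace Subgroup

theorem card_sup_dvd_mul (H K : Subgroup G) [K.Normal] :
    Nat.card ↥(H ⊔ K) ∣ Nat.card H * Nat.card K := by
  have h := relIndex_mul_relIndex ⊥ K (H ⊔ K) bot_le le_sup_right
  rw [relIndex_sup_right, relIndex_bot_left, relIndex_bot_left] at h
  rw [← h, mul_comm (Nat.card H)]
  exact mul_dvd_mul_left _ (relIndex_dvd_card K H)

theorem eq_of_le_of_coprime_card_index {H K : Subgroup G} (hHK : H ≤ K)
    (h : (Nat.card K).Coprime H.index) : H = K :=
  le_antisymm hHK <| relIndex_eq_one.mp <|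
    Nat.eq_one_of_dvd_coprimes h (relIndex_dvd_card H K) (relIndex_dvd_index_of_le hHK)

theorem index_dvd_card_of_sup_eq_top {H K : Subgroup G} [K.Normal] (h : H ⊔ K = ⊤) :
    K.index ∣ Nat.card H := by
  rw [← relIndex_top_right, ← h, relIndex_sup_right]
  exact relIndex_dvd_card K H

theorem le_inf_sup_inf_of_le_sup {A B K : Subgroup G} [A.Normal] [B.Normal]
    (hAB : (Nat.card A).Coprime (Nat.card B)) (hK : K ≤ A ⊔ B) : K ≤ K ⊓ A ⊔ K ⊓ B := by
  intro x hx
  have hx' := hK hx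
  rw [← SetLike.mem_coe, mul_normal, Set.mem_mul] at hx'
  obtain ⟨a, ha, b, hb, rfl⟩ := hx'
  have hab : Commute a b := commutatorElement_eq_one_iff_commute.mp <| mem_bot.mp <|
    commutator_eq_bot_of_disjoint (disjoint_of_coprime_natCard hAB) ▸
      commutator_mem_commutator ha hb
  have haK : a ∈ K := hab.mem_of_mul_mem_of_coprime hx
    (orderOf_dvd_iff_pow_eq_one.mp (Subgroup.orderOf_dvd_natCard B hb))
    (hAB.symm.coprime_dvd_right (Subgroup.orderOf_dvd_natCard A ha))
  have hbK : b ∈ K := by simpa using mul_mem (inv_mem haK) hx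
  exact mul_mem (mem_sup_left ⟨haK, ha⟩) (mem_sup_right ⟨hbK, hb⟩)

theorem eq_top_of_forall_exists_sylow_le [Finite G] {J : Subgroup G}
    (h : ∀ (q : ℕ) [Fact q.Prime], ∃ R : Sylow q G, (R : Subgroup G) ≤ J) : J = ⊤ := by
  by_contra hJ
  obtain ⟨q, hq, hqJ⟩ := Nat.exists_prime_and_dvd (mt index_eq_one.mp hJ)
  have := Fact.mk hq
  obtain ⟨R, hRJ⟩ := h q
  exact R.not_dvd_index (hqJ.trans (index_dvd_of_le hRJ))

theorem normal_map_subtype_of_characteristic {A : Subgroup G} [A.Normal] (K : Subgroup A)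
    [K.Characteristic] : (K.map A.subtype).Normal := by
  refine ⟨?_⟩
  rintro _ ⟨k, hk, rfl⟩ g
  refine ⟨MulAut.conjNormal g k, ?_, MulAut.conjNormal_apply g k⟩
  rw [← characteristic_iff_map_eq.mp ‹K.Characteristic› (MulAut.conjNormal g)]
  exact mem_map_of_mem _ hk

theorem characteristic_sSup_of_map_mem {S : Set (Subgroup G)}
    (hS : ∀ (φ : G ≃* G), ∀ K ∈ S, K.map φ.toMonoidHom ∈ S) :
    (sSup S).Characteristic := by
  refine characteristic_iff_map_le.mpr fun φ => ?_
  rw [map_le_iff_le_comap]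
  exact sSup_le fun K hK => map_le_iff_le_comap.mp (le_sSup (hS φ K hK))

theorem eq_bot_of_le_commutator {S X : Subgroup G} [Group.IsNilpotent S] (hXS : X ≤ S)
    (hX : X ≤ ⁅X, S⁆) : X = ⊥ := by
  have hlcs : ∀ n, X ≤ S.lowerCentralSeries n := by
    intro n
    induction n with
    | zero => exact hXS
    | succ n ih => exact hX.trans (commutator_mono ih le_rfl)
  exact le_bot_iff.mp ((hlcs _).trans (lowerCentralSeries_eq_bot_of_nilpotencyClass_le le_rfl).le)

theorem le_of_le_sup_commutator {P K : Subgroup G} [Group.IsNilpotent P] (hKP : K ≤ P)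
    (hK : ⁅K, P⁆ ≤ K) (h : P ≤ K ⊔ ⁅P, P⁆) : P ≤ K := by
  have : (K.subgroupOf P).Normal :=
    (normal_subgroupOf_iff_le_normalizer hKP).mpr (le_normalizer_iff_commutator_le_left.mpr hK)
  have htop : K.subgroupOf P ⊔ _root_.commutator P = ⊤ := by
    rw [eq_top_iff, ← map_le_map_iff_of_injective P.subtype_injective, Subgroup.map_sup,
      map_subgroupOf_eq_of_le hKP, map_subtype_commutator, ← MonoidHom.range_eq_map,
      range_subtype]
    exact h
  let π := QuotientGroup.mk' (K.subgroupOf P)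
  have hπ : Function.Surjective π := QuotientGroup.mk'_surjective _
  have : Group.IsNilpotent (P ⧸ K.subgroupOf P) := Group.nilpotent_of_surjective π hπ
  have : Group.IsNilpotent (⊤ : Subgroup (P ⧸ K.subgroupOf P)) := Group.isNilpotent_top.mpr this
  have hperfect : (⊤ : Subgroup (P ⧸ K.subgroupOf P)) = ⁅⊤, ⊤⁆ :=
    calc ⊤ = (K.subgroupOf P ⊔ _root_.commutator P).map π := by
          rw [htop, map_top_of_surjective π hπ]
      _ = ⁅⊤, ⊤⁆ := by
        rw [Subgroup.map_sup, (Subgroup.map_eq_bot_iff _).mpr (QuotientGroup.ker_mk' _).ge,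
          bot_sup_eq, _root_.commutator_def, map_commutator, map_top_of_surjective π hπ]
  have hbot := eq_bot_of_le_commutator le_rfl hperfect.le
  intro x hx
  have hx' : π ⟨x, hx⟩ ∈ (⊥ : Subgroup (P ⧸ K.subgroupOf P)) := hbot ▸ mem_top _
  rwa [mem_bot, QuotientGroup.mk'_apply, QuotientGroup.eq_one_iff, mem_subgroupOf] at hx'

theorem le_commutator_top_of_le_sup {N P Q : Subgroup G} [P.Normal] [Q.Normal]
    (hPQ : Disjoint P Q) (hPN : P ≤ N) (hN : N ≤ ⁅N, ⊤⁆) (hNPQ : N ≤ P ⊔ Q) :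
    P ≤ ⁅P, ⊤⁆ := by
  have hsup : ⁅P ⊔ Q, ⊤⁆ ≤ ⁅P, ⊤⁆ ⊔ Q := by
    rw [commutator_le]
    intro x hx g _
    rw [← SetLike.mem_coe, mul_normal, Set.mem_mul] at hx
    obtain ⟨u, hu, v, hv, rfl⟩ := hx
    rw [commutatorElement_mul_left_eq_conj_mul]
    refine mul_mem (mem_sup_right ?_) (mem_sup_left (commutator_mem_commutator hu (mem_top g)))
    exact Normal.conj_mem ‹_› _
      (commutator_le_left Q ⊤ (commutator_mem_commutator hv (mem_top g))) u
  intro x hx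
  have hx' := hsup (commutator_mono hNPQ le_rfl (hN (hPN hx)))
  rw [← SetLike.mem_coe, mul_normal, Set.mem_mul] at hx'
  obtain ⟨a, ha, b, hb, rfl⟩ := hx'
  have haP : a ∈ P := commutator_le_left P ⊤ ha
  have hbP : b ∈ P := by simpa using mul_mem (inv_mem haP) hx
  rwa [disjoint_def.mp hPQ hbP hb, mul_one]

theorem commutator_sup_sup_le {P Q H : Subgroup G} [P.Normal] [Q.Normal] (hPQ : ⁅P, Q⁆ = ⊥) :
    ⁅P, P ⊔ Q ⊔ H⁆ ≤ ⁅P, H⁆ ⊔ ⁅P, P⁆ := by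
  rw [commutator_le]
  intro x hx m hm
  rw [← SetLike.mem_coe, normal_mul, Set.mem_mul] at hm
  obtain ⟨n, hn, h, hh, rfl⟩ := hm
  rw [normal_mul, Set.mem_mul] at hn
  obtain ⟨u, hu, v, hv, rfl⟩ := hn
  have hcomm : ∀ y ∈ P, ⁅y, v⁆ = 1 := fun y hy =>
    mem_bot.mp (hPQ ▸ commutator_mem_commutator hy hv)
  have hxh : ⁅x, h⁆ ∈ P := commutator_le_left P H (commutator_mem_commutator hx hh)
  have hvxh : v * ⁅x, h⁆ * v⁻¹ = ⁅x, h⁆ := by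
    rw [← commutatorElement_eq_one_iff_mul_comm.mp (hcomm _ hxh)]
    group
  have key : ⁅x, u * v * h⁆ = ⁅x, u⁆ * (u * ⁅x, h⁆ * u⁻¹) :=
    calc ⁅x, u * v * h⁆ = ⁅x, u⁆ * (u * (v * ⁅x, h⁆ * v⁻¹) * u⁻¹) := by
          rw [commutatorElement_mul_right_eq_mul_conj, commutatorElement_mul_right_eq_mul_conj,
            hcomm x hx]
          group
      _ = ⁅x, u⁆ * (u * ⁅x, h⁆ * u⁻¹) := by rw [hvxh]
  rw [key]
  refine mul_mem (mem_sup_right (commutator_mem_commutator hx hu)) (mem_sup_left ?_)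
  exact (mem_normalizer_iff.mp (normalizer_commutator_ge_left P H hu) _).mp
    (commutator_mem_commutator hx hh)

theorem eq_bot_of_le_commutator_top [Finite G] {p : ℕ} [Fact p.Prime] {X M : Subgroup G}
    [X.Normal] [M.Normal] (hXp : IsPGroup p X) (hX : X ≤ ⁅X, ⊤⁆) (hXM : ⁅X, M⁆ = ⊥)
    {n : ℕ} (hMi : M.index ∣ p ^ n) : X = ⊥ := by
  let S : Sylow p G := default
  have hMS : M ⊔ S = ⊤ := index_eq_one.mp <| Nat.eq_one_of_dvd_coprimes
    (Nat.Coprime.of_not_dvd_of_dvd_prime_pow Fact.out S.not_dvd_index dvd_rfl).symm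
    ((index_dvd_of_le le_sup_left).trans hMi) (index_dvd_of_le le_sup_right)
  have hcomm : ∀ x ∈ X, ∀ m ∈ M, ⁅x, m⁆ = 1 := fun x hx m hm =>
    mem_bot.mp (hXM ▸ commutator_mem_commutator hx hm)
  have hXS : ⁅X, ⊤⁆ ≤ ⁅X, (S : Subgroup G)⁆ := by
    rw [← hMS, commutator_le]
    intro x hx g hg
    rw [← SetLike.mem_coe, normal_mul, Set.mem_mul] at hg
    obtain ⟨m, hm, s, hs, rfl⟩ := hg
    have hxs : ⁅x, s⁆ ∈ X := commutator_le_left X S (commutator_mem_commutator hx hs)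
    have hmxs : m * ⁅x, s⁆ * m⁻¹ = ⁅x, s⁆ := by
      rw [← commutatorElement_eq_one_iff_mul_comm.mp (hcomm _ hxs m hm)]
      group
    rw [commutatorElement_mul_right_eq_mul_conj, hcomm x hx m hm, one_mul, hmxs]
    exact commutator_mem_commutator hx hs
  have : Group.IsNilpotent S := S.isPGroup'.isNilpotent
  exact eq_bot_of_le_commutator (hXp.le_sylow_of_normal S) (hX.trans hXS)

theorem le_commutator_of_index_dvd [Finite G] {p : ℕ} [Fact p.Prime] {X M : Subgroup G}
    [X.Normal] [M.Normal] (hXp : IsPGroup p X) (hX : X ≤ ⁅X, ⊤⁆) {n : ℕ}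
    (hMi : M.index ∣ p ^ n) : X ≤ ⁅X, M⁆ := by
  let π := QuotientGroup.mk' ⁅X, M⁆
  have hπ : Function.Surjective π := QuotientGroup.mk'_surjective _
  have : (X.map π).Normal := Normal.map ‹_› π hπ
  have : (M.map π).Normal := Normal.map ‹_› π hπ
  have hX' : X.map π = ⊥ := by
    refine eq_bot_of_le_commutator_top (hXp.map π) ?_ ?_ ((index_map_dvd M hπ).trans hMi)
    · rw [← map_top_of_surjective π hπ, ← map_commutator]
      exact map_mono hX
    · rw [← map_commutator, Subgroup.map_eq_bot_iff, QuotientGroup.ker_mk']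
  rwa [Subgroup.map_eq_bot_iff, QuotientGroup.ker_mk'] at hX'

end Subgroup

section Cores

-- `O_p(G)` and `O_{p'}(G)`.
def pCore (p : ℕ) (G : Type*) [Group G] : Subgroup G := sSup {K | K.Normal ∧ IsPGroup p K}

def pPrimeCore (p : ℕ) (G : Type*) [Group G] : Subgroup G :=
  sSup {K | K.Normal ∧ ¬ p ∣ Nat.card K}

variable {p : ℕ}

instance pCore_normal : (pCore p G).Normal := sSup_normal _ fun _ h => h.1

instance pPrimeCore_normal : (pPrimeCore p G).Normal := sSup_normal _ fun _ h => h.1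

instance pCore_characteristic : (pCore p G).Characteristic :=
  characteristic_sSup_of_map_mem fun φ _ ⟨hn, hK⟩ => ⟨hn.map _ φ.surjective, hK.map _⟩

instance pPrimeCore_characteristic : (pPrimeCore p G).Characteristic :=
  characteristic_sSup_of_map_mem fun φ _ ⟨hn, hK⟩ =>
    ⟨hn.map _ φ.surjective, by rwa [card_map_of_injective φ.injective]⟩

theorem isPGroup_pCore : IsPGroup p (pCore p G) := by
  rw [pCore, sSup_eq_iSup]
  exact Sylow.biSup_of_normal _ id (fun _ h => h.2) (fun _ h => h.1)

theorem le_pCore {K : Subgroup G} [K.Normal] (hK : IsPGroup p K) : K ≤ pCore p G :=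
  le_sSup ⟨‹_›, hK⟩

theorem le_pPrimeCore {K : Subgroup G} [K.Normal] (hK : ¬ p ∣ Nat.card K) :
    K ≤ pPrimeCore p G :=
  le_sSup ⟨‹_›, hK⟩

theorem not_dvd_card_pPrimeCore [Finite G] (hp : p.Prime) :
    ¬ p ∣ Nat.card (pPrimeCore p G) := by
  refine Set.Finite.induction_on_subset
    (motive := fun t _ => ¬ p ∣ Nat.card (sSup t : Subgroup G)) _ (Set.toFinite _)
    (by simpa using hp.not_dvd_one) ?_
  intro K t hK hts _ ht
  have : (sSup t).Normal := sSup_normal _ fun L hL => (hts hL).1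
  rw [sSup_insert]
  intro hdvd
  rcases (Nat.Prime.dvd_mul hp).mp (hdvd.trans (card_sup_dvd_mul K (sSup t))) with h | h
  exacts [hK.2 h, ht h]

theorem coprime_card_pCore_pPrimeCore [Finite G] [Fact p.Prime] :
    (Nat.card (pCore p G)).Coprime (Nat.card (pPrimeCore p G)) := by
  obtain ⟨k, hk⟩ := IsPGroup.iff_card.mp (isPGroup_pCore (p := p) (G := G))
  exact (Nat.Coprime.of_not_dvd_of_dvd_prime_pow Fact.out
    (not_dvd_card_pPrimeCore Fact.out) (dvd_of_eq hk)).symm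

theorem pCore_sup_pPrimeCore_eq_top [Finite G] [Group.IsNilpotent G] [Fact p.Prime] :
    pCore p G ⊔ pPrimeCore p G = ⊤ := by
  refine eq_top_of_forall_exists_sylow_le fun q hq => ⟨default, ?_⟩
  obtain rfl | hqp := eq_or_ne q p
  · exact le_sup_of_le_left (le_pCore (default : Sylow q G).isPGroup')
  · obtain ⟨k, hk⟩ := IsPGroup.iff_card.mp (default : Sylow q G).isPGroup'
    refine le_sup_of_le_right (le_pPrimeCore fun hdvd => hqp ?_)
    rw [hk] at hdvd
    exact ((Nat.prime_dvd_prime_iff_eq Fact.out hq.out).mp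
      ((Fact.out : p.Prime).dvd_of_dvd_pow hdvd)).symm

theorem le_pCore_sup_pPrimeCore_of_isNilpotent [Finite G] [Fact p.Prime] (A : Subgroup G)
    [A.Normal] [Group.IsNilpotent A] : A ≤ pCore p G ⊔ pPrimeCore p G := by
  have hA : A = (pCore p A ⊔ pPrimeCore p A).map A.subtype := by
    rw [pCore_sup_pPrimeCore_eq_top, ← MonoidHom.range_eq_map, range_subtype]
  have := normal_map_subtype_of_characteristic (pCore p A)
  have := normal_map_subtype_of_characteristic (pPrimeCore p A)
  rw [hA, Subgroup.map_sup]
  refine sup_le_sup (le_pCore (isPGroup_pCore.map _)) (le_pPrimeCore ?_)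
  rw [card_map_of_injective A.subtype_injective]
  exact not_dvd_card_pPrimeCore Fact.out

theorem fitting_le_pCore_sup_pPrimeCore [Finite G] [Fact p.Prime] :
    fitting G ≤ pCore p G ⊔ pPrimeCore p G :=
  iSup₂_le fun A ⟨_, _⟩ => le_pCore_sup_pPrimeCore_of_isNilpotent A

theorem eq_pPrimeCore_of_isNilpotent [Finite G] [Group.IsNilpotent G] (hp : p.Prime)
    {W : Subgroup G} (hW : ¬ p ∣ Nat.card W) {n : ℕ} (hWi : W.index ∣ p ^ n) :
    W = pPrimeCore p G := by
  have := Fact.mk hp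
  have hO : pPrimeCore p G ≤ W := by
    have hsup : ¬ p ∣ Nat.card ↥(W ⊔ pPrimeCore p G) := fun h =>
      (Nat.Prime.dvd_mul hp).mp (h.trans (card_sup_dvd_mul _ _)) |>.elim hW
        (not_dvd_card_pPrimeCore hp)
    rw [eq_of_le_of_coprime_card_index le_sup_left
      (Nat.Coprime.of_not_dvd_of_dvd_prime_pow hp hsup hWi)]
    exact le_sup_right
  obtain ⟨k, hk⟩ := IsPGroup.iff_card.mp (isPGroup_pCore (p := p) (G := G))
  have hOi : (pPrimeCore p G).index ∣ p ^ k :=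
    hk ▸ index_dvd_card_of_sup_eq_top pCore_sup_pPrimeCore_eq_top
  exact (eq_of_le_of_coprime_card_index hO
    (Nat.Coprime.of_not_dvd_of_dvd_prime_pow hp hW hOi)).symm

theorem inf_pCore_eq_of_le_sup [Finite G] [Fact p.Prime] {N P : Subgroup G}
    (hN : N ≤ pCore p G ⊔ pPrimeCore p G) (hPN : P ≤ N) (hPp : IsPGroup p P)
    (hPmax : ∀ Q : Subgroup G, Q ≤ N → IsPGroup p Q → P ≤ Q → Q = P) :
    N ⊓ pCore p G = P := by
  obtain ⟨k, hk⟩ := IsPGroup.iff_card.mp hPp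
  have hP' : P ⊓ pPrimeCore p G = ⊥ := disjoint_iff.mp <| disjoint_of_coprime_natCard <|
    (Nat.Coprime.of_not_dvd_of_dvd_prime_pow Fact.out (not_dvd_card_pPrimeCore Fact.out)
      (dvd_of_eq hk)).symm
  have hP : P ≤ pCore p G := by
    have := le_inf_sup_inf_of_le_sup coprime_card_pCore_pPrimeCore (hPN.trans hN)
    rw [hP', sup_bot_eq] at this
    exact this.trans inf_le_right
  exact hPmax _ inf_le_left (isPGroup_pCore.to_le inf_le_right) (le_inf hPN hP)

end Cores

instance nilRes_normal : (nilRes G).Normal :=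
  normal_iInf_normal fun n => lowerCentralSeries_normal ⊤ n

theorem exists_lowerCentralSeries_eq_nilRes [Finite G] :
    ∃ n, ∀ m, n ≤ m → (⊤ : Subgroup G).lowerCentralSeries m = nilRes G := by
  obtain ⟨n, hn⟩ :=
    WellFoundedLT.antitone_chain_condition (Subgroup.lowerCentralSeries_antitone (G := G) ⊤)
  have hN : (⊤ : Subgroup G).lowerCentralSeries n = nilRes G := by
    refine le_antisymm (le_iInf fun m => ?_) (iInf_le _ n)
    rcases le_total n m with h | h
    exacts [(hn m h).le, Subgroup.lowerCentralSeries_antitone _ h]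
  exact ⟨n, fun m hm => (hn m hm).symm.trans hN⟩

theorem commutator_nilRes_top [Finite G] : ⁅nilRes G, ⊤⁆ = nilRes G := by
  obtain ⟨n, hn⟩ := exists_lowerCentralSeries_eq_nilRes (G := G)
  conv_rhs => rw [← hn (n + 1) n.le_succ]
  rw [Subgroup.lowerCentralSeries_succ, hn n le_rfl]

instance isNilpotent_quotient_nilRes [Finite G] : Group.IsNilpotent (G ⧸ nilRes G) := by
  obtain ⟨n, hn⟩ := exists_lowerCentralSeries_eq_nilRes (G := G)
  refine Subgroup.nilpotent_iff_lowerCentralSeries.mpr ⟨n, ?_⟩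
  rw [← map_top_of_surjective _ (QuotientGroup.mk'_surjective (nilRes G)),
    ← map_lowerCentralSeries, hn n le_rfl, Subgroup.map_eq_bot_iff, QuotientGroup.ker_mk']

theorem sup_nilRes_normal [Finite G] {p : ℕ} (hp : p.Prime) {H : Subgroup G}
    (hH : ¬ p ∣ Nat.card H) {n : ℕ} (hHi : H.index ∣ p ^ n) : (H ⊔ nilRes G).Normal := by
  let π := QuotientGroup.mk' (nilRes G)
  have hW : H.map π = pPrimeCore p (G ⧸ nilRes G) :=
    eq_pPrimeCore_of_isNilpotent hp (fun h => hH (h.trans (card_map_dvd H π)))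
      ((index_map_dvd _ (QuotientGroup.mk'_surjective _)).trans hHi)
  have hcomap : H ⊔ nilRes G = (H.map π).comap π := by
    rw [comap_map_eq, QuotientGroup.ker_mk']
  rw [hcomap, hW]
  exact pPrimeCore_normal.comap π

/-- If `γ_∞(G) ≤ F(G)`, `P` is a Sylow `p`-subgroup of `γ_∞(G)` and `H` a Hall
`p'`-subgroup of `G`, then `P = [P, H]`. -/
theorem stmt16 {G : Type} [Group G] [Finite G] {p : ℕ} (hp : p.Prime)
    (hres : nilRes G ≤ fitting G)
    (P : Subgroup G) (hPle : P ≤ nilRes G) (hPp : IsPGroup p P)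
    (hPsyl : ∀ Q : Subgroup G, Q ≤ nilRes G → IsPGroup p Q → P ≤ Q → Q = P)
    (H : Subgroup G) (hHp' : ¬ p ∣ Nat.card H)
    (hHall : Nat.card H * p ^ (Nat.card G).factorization p = Nat.card G) :
    ⁅P, H⁆ = P := by
  have := Fact.mk hp
  have hN : nilRes G ≤ pCore p G ⊔ pPrimeCore p G := hres.trans fitting_le_pCore_sup_pPrimeCore
  have hPeq := inf_pCore_eq_of_le_sup hN hPle hPp hPsyl
  have : P.Normal := hPeq ▸ normal_inf_normal _ _
  set Q := nilRes G ⊓ pPrimeCore p G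
  have hPQ : Disjoint P Q := by
    rw [← hPeq]
    exact (disjoint_of_coprime_natCard coprime_card_pCore_pPrimeCore).mono inf_le_right
      inf_le_right
  have hNPQ : nilRes G ≤ P ⊔ Q :=
    hPeq ▸ le_inf_sup_inf_of_le_sup coprime_card_pCore_pPrimeCore hN
  have hPG : P ≤ ⁅P, ⊤⁆ :=
    le_commutator_top_of_le_sup hPQ hPle commutator_nilRes_top.ge hNPQ
  have hHi : H.index ∣ p ^ (Nat.card G).factorization p :=
    (Nat.eq_of_mul_eq_mul_left Nat.card_pos (hHall.trans (card_mul_index H).symm)).symm ▸ dvd_rfl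
  have := sup_nilRes_normal hp hHp' hHi
  have hPM : P ≤ ⁅P, H ⊔ nilRes G⁆ :=
    le_commutator_of_index_dvd hPp hPG ((index_dvd_of_le le_sup_left).trans hHi)
  have hle : ⁅P, H ⊔ nilRes G⁆ ≤ ⁅P, H⁆ ⊔ ⁅P, P⁆ :=
    (commutator_mono le_rfl (sup_le le_sup_right (hNPQ.trans le_sup_left))).trans
      (commutator_sup_sup_le (commutator_eq_bot_of_disjoint hPQ))
  have : Group.IsNilpotent P := hPp.isNilpotent
  exact le_antisymm (commutator_le_left P H) <| le_of_le_sup_commutator (commutator_le_left P H)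
    (le_normalizer_iff_commutator_le_left.mp (normalizer_commutator_ge_left P H)) (hPM.trans hle)
end
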